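/- Let k ≥ 2 be an integer and let α₁, …, α_{2k−2} be real numbers in [0, π/2] with ∑_{i=1}^{2k−2} α_i = π. Then ∑_{i=1}^{2k−2} (1/2)·Λ(α_i) ≤ (k − 1)·Λ(π/(2k − 2)). -/

import Mathlib

/-!
`Λ` is concave on `[0, π/2]`, since its derivative `-log (2 sin x)` decreases there.
Jensen's inequality with equal weights for the `2k - 2` angles, whose mean is `π / (2k - 2)`,
gives the bound.
-/

open Real

/-- The Lobachevsky function `Λ(x) = -∫₀ˣ log |2 sin t| dt`. -/
noncomputable def lobachevsky (x : ℝ) : ℝ :=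
  -∫ t in (0:ℝ)..x, Real.log |2 * Real.sin t|

open Finset MeasureTheory Set

theorem ConcaveOn.sum_le_card_mul_map_smul_sum {E : Type*} [AddCommGroup E] [Module ℝ E]
    {s : Set E} {f : E → ℝ} (hf : ConcaveOn ℝ s f) {ι : Type*} (t : Finset ι) {p : ι → E}
    (hp : ∀ i ∈ t, p i ∈ s) :
    ∑ i ∈ t, f (p i) ≤ #t * f ((#t : ℝ)⁻¹ • ∑ i ∈ t, p i) := by
  rcases t.eq_empty_or_nonempty with rfl | ht
  · simp
  have hcard : (0 : ℝ) < #t := by exact_mod_cast ht.card_pos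
  have hmean := hf.le_map_sum (w := fun _ => (#t : ℝ)⁻¹) (fun _ _ => by positivity)
    (by simp [hcard.ne']) hp
  rw [← Finset.smul_sum, ← Finset.smul_sum, smul_eq_mul] at hmean
  rwa [inv_mul_le_iff₀ hcard] at hmean

theorem intervalIntegrable_log_abs_two_mul_sin (a b : ℝ) :
    IntervalIntegrable (fun t => log |2 * sin t|) volume a b :=
  ((analyticOnNhd_const.mul analyticOnNhd_sin).meromorphicOn).intervalIntegrable_log_norm

theorem continuous_lobachevsky : Continuous lobachevsky :=
  (intervalIntegral.continuous_primitive intervalIntegrable_log_abs_two_mul_sin 0).neg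

theorem hasDerivAt_lobachevsky {x : ℝ} (hx : sin x ≠ 0) :
    HasDerivAt lobachevsky (-log |2 * sin x|) x := by
  have hmeas : Measurable fun t => log |2 * sin t| := by fun_prop
  have hcont : ContinuousAt (fun t => log |2 * sin t|) x :=
    (continuous_abs.comp (continuous_const.mul continuous_sin)).continuousAt.log (by simpa using hx)
  exact (intervalIntegral.integral_hasDerivAt_right (intervalIntegrable_log_abs_two_mul_sin 0 x)
    hmeas.aestronglyMeasurable.stronglyMeasurableAtFilter hcont).neg

theorem concaveOn_lobachevsky : ConcaveOn ℝ (Icc 0 (π / 2)) lobachevsky := by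
  have hsin_pos : ∀ x ∈ Ioo 0 (π / 2), 0 < sin x := fun x hx =>
    sin_pos_of_pos_of_lt_pi hx.1 (hx.2.trans (by linarith [pi_pos]))
  refine AntitoneOn.concaveOn_of_deriv (convex_Icc _ _) continuous_lobachevsky.continuousOn
    (fun x hx => ?_) ?_
  · rw [interior_Icc] at hx
    exact (hasDerivAt_lobachevsky (hsin_pos x hx).ne').differentiableAt.differentiableWithinAt
  rw [interior_Icc]
  intro x hx y hy hxy
  rw [(hasDerivAt_lobachevsky (hsin_pos x hx).ne').deriv,
    (hasDerivAt_lobachevsky (hsin_pos y hy).ne').deriv, neg_le_neg_iff]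
  have hsin_le : sin x ≤ sin y := strictMonoOn_sin.monotoneOn
    ⟨by linarith [hx.1, pi_pos], hx.2.le⟩ ⟨by linarith [hy.1, pi_pos], hy.2.le⟩ hxy
  have hx_pos := hsin_pos x hx
  rw [abs_of_pos (by linarith), abs_of_pos (by linarith)]
  exact log_le_log (by linarith) (by linarith)

/-- For an integer `k ≥ 2` and reals `α₁, …, α_{2k−2} ∈ [0, π/2]` summing to `π`,
`∑ (1/2)·Λ(αᵢ) ≤ (k − 1)·Λ(π/(2k − 2))`. -/
theorem cone_volume_bound_quasi_incident (k : ℕ) (hk : 2 ≤ k)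
    (α : Fin (2 * k - 2) → ℝ) (hα : ∀ i, α i ∈ Set.Icc 0 (Real.pi / 2))
    (hsum : ∑ i, α i = Real.pi) :
    ∑ i, (1 / 2) * lobachevsky (α i) ≤
      ((k : ℝ) - 1) * lobachevsky (Real.pi / (2 * (k : ℝ) - 2)) := by
  have hcard : ((#(univ : Finset (Fin (2 * k - 2))) : ℕ) : ℝ) = 2 * k - 2 := by
    rw [card_univ, Fintype.card_fin, Nat.cast_sub (by omega)]
    push_cast
    ring
  have hjensen := concaveOn_lobachevsky.sum_le_card_mul_map_smul_sum univ fun i _ => hα i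
  rw [hcard, hsum, smul_eq_mul, inv_mul_eq_div] at hjensen
  rw [← mul_sum]
  linarith
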